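/- arXiv:1509.01842 — 2 statements merged into one kernel-verified Lean document; each statement's English description precedes it below -/
import Mathlib

section
/- Let A : D ⊆ H → H be densely defined, symmetric, with A ≥ 1. Let 𝓗 be the completion of D under the inner product [u,v] = ⟨Au,v⟩. Then the identity map on D extends to a continuous injective embedding of 𝓗 into H with operator norm at most 1. -/
open scoped InnerProductSpace

/-!
Since `‖u‖² ≤ ⟨Au, u⟩ = ‖ψ u‖²`, the inclusion `D → H` is bounded by `1` with respect to the form
norm, so it extends by density to `e : 𝓗 →L H` with `‖e‖ ≤ 1`. By continuity the identity
`[ψ v, x] = ⟨A v, e x⟩` passes from `x ∈ ψ(D)` to all `x ∈ 𝓗`; hence `e x = 0` makes `x`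
orthogonal to the dense subspace `ψ(D)`, so `x = 0`.
-/

theorem ContinuousLinearMap.injective_of_inner_eq_inner_map {𝕜 E F G : Type*} [RCLike 𝕜]
    [NormedAddCommGroup F] [InnerProductSpace 𝕜 F] [NormedAddCommGroup G] [InnerProductSpace 𝕜 G]
    {ψ : E → F} (hψ : DenseRange ψ) (A : E → G) (e : F →L[𝕜] G)
    (h : ∀ v u, ⟪ψ v, ψ u⟫_𝕜 = ⟪A v, e (ψ u)⟫_𝕜) : Function.Injective e := by
  have h_inner (v : E) (x : F) : ⟪ψ v, x⟫_𝕜 = ⟪A v, e x⟫_𝕜 :=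
    hψ.induction_on x (isClosed_eq (by fun_prop) (by fun_prop)) (h v)
  refine (injective_iff_map_eq_zero e).mpr fun x hx => hψ.eq_zero_of_inner_right 𝕜 fun v => ?_
  rw [h_inner, hx, inner_zero_right]

theorem stmt3_general {H 𝓗 : Type*} [NormedAddCommGroup H] [InnerProductSpace ℂ H] [CompleteSpace H]
    [NormedAddCommGroup 𝓗] [InnerProductSpace ℂ 𝓗]
    (D : Submodule ℂ H) (A : D →ₗ[ℂ] H)
    (hbd : ∀ u : D, ‖(u : H)‖ ^ 2 ≤ (⟪A u, (u : H)⟫_ℂ).re)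
    (ψ : D →ₗ[ℂ] 𝓗) (hψdense : DenseRange ψ)
    (hψ : ∀ u v : D, ⟪ψ u, ψ v⟫_ℂ = ⟪A u, (v : H)⟫_ℂ) :
    ∃ e : 𝓗 →L[ℂ] H, (∀ u : D, e (ψ u) = (u : H)) ∧ Function.Injective e ∧ ‖e‖ ≤ 1 := by
  have h_norm (u : D) : ‖D.subtype u‖ ≤ 1 * ‖ψ u‖ := by
    have h_sq : ‖(u : H)‖ ^ 2 ≤ ‖ψ u‖ ^ 2 := by
      rw [← inner_self_eq_norm_sq (𝕜 := ℂ) (ψ u), hψ]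
      exact hbd u
    simpa using pow_le_pow_iff_left₀ (norm_nonneg _) (norm_nonneg _) two_ne_zero |>.mp h_sq
  set e := D.subtype.extendOfNorm ψ
  have he (u : D) : e (ψ u) = u := LinearMap.extendOfNorm_eq hψdense ⟨1, h_norm⟩ u
  refine ⟨e, he, ?_, LinearMap.opNorm_extendOfNorm_le hψdense zero_le_one h_norm⟩
  exact e.injective_of_inner_eq_inner_map hψdense A fun v u => by rw [hψ, he]

/-- For a densely defined symmetric `A ≥ 1`, the identity map on `D` extends to a continuous
injective embedding of the form-completion `𝓗` into `H` of norm at most `1`.  Here `𝓗` is an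
abstract completion: a Hilbert space together with a linear map `ψ : D → 𝓗` with dense range
realizing the form inner product `[u,v] = ⟨Au,v⟩`. -/
theorem stmt3 {H 𝓗 : Type*} [NormedAddCommGroup H] [InnerProductSpace ℂ H] [CompleteSpace H]
    [NormedAddCommGroup 𝓗] [InnerProductSpace ℂ 𝓗] [CompleteSpace 𝓗]
    (D : Submodule ℂ H) (hD : Dense (D : Set H)) (A : D →ₗ[ℂ] H)
    (hsym : ∀ u v : D, ⟪A u, (v : H)⟫_ℂ = ⟪(u : H), A v⟫_ℂ)
    (hbd : ∀ u : D, ‖(u : H)‖ ^ 2 ≤ (⟪A u, (u : H)⟫_ℂ).re)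
    (ψ : D →ₗ[ℂ] 𝓗) (hψdense : DenseRange ψ)
    (hψ : ∀ u v : D, ⟪ψ u, ψ v⟫_ℂ = ⟪A u, (v : H)⟫_ℂ) :
    ∃ e : 𝓗 →L[ℂ] H, (∀ u : D, e (ψ u) = (u : H)) ∧ Function.Injective e ∧ ‖e‖ ≤ 1 :=
  stmt3_general D A hbd ψ hψdense hψ
end

section
/- Let A : D ⊆ H → H be densely defined, symmetric, A ≥ 1, with Friedrichs extension A_F on domain 𝒟_F. Then A_F is selfadjoint and ⟨A_F u, u⟩ ≥ ‖u‖² for all u ∈ 𝒟_F; in particular 0 is in the resolvent set of A_F and ‖A_F⁻¹‖ ≤ 1. -/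
open scoped InnerProductSpace

/-- Friedrichs extension: let `A` be densely defined, symmetric, `A ≥ 1`, with form-domain
completion `𝓗` (realized by `ψ : dom A → 𝓗` and a continuous injective embedding
`e : 𝓗 → H` extending the identity on `dom A`).  The Friedrichs extension `A_F`, the
restriction of `A*` to `𝒟_F = dom(A*) ∩ e(𝓗)`, is selfadjoint with `⟨A_F u, u⟩ ≥ ‖u‖²`;
in particular `A_F` is bijective with `‖A_F⁻¹‖ ≤ 1`. -/
theorem stmt19 {H 𝓗 : Type*}
    [NormedAddCommGroup H] [InnerProductSpace ℂ H] [CompleteSpace H]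
    [NormedAddCommGroup 𝓗] [InnerProductSpace ℂ 𝓗] [CompleteSpace 𝓗]
    (A : H →ₗ.[ℂ] H) (hdense : Dense (A.domain : Set H))
    (hsym : ∀ u v : A.domain, ⟪A u, (v : H)⟫_ℂ = ⟪(u : H), A v⟫_ℂ)
    (hbd : ∀ u : A.domain, ‖(u : H)‖ ^ 2 ≤ (⟪A u, (u : H)⟫_ℂ).re)
    (ψ : A.domain →ₗ[ℂ] 𝓗) (hψdense : DenseRange ψ)
    (hψ : ∀ u v : A.domain, ⟪ψ u, ψ v⟫_ℂ = ⟪A u, (v : H)⟫_ℂ)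
    (e : 𝓗 →L[ℂ] H) (heinj : Function.Injective e)
    (he : ∀ u : A.domain, e (ψ u) = (u : H))
    (AF : H →ₗ.[ℂ] H)
    (hAF : AF = A.adjoint.domRestrict (LinearMap.range (e : 𝓗 →ₗ[ℂ] H))) :
    AF.adjoint = AF ∧
    (∀ u : AF.domain, ‖(u : H)‖ ^ 2 ≤ (⟪AF u, (u : H)⟫_ℂ).re) ∧
    Function.Bijective (fun u : AF.domain => AF u) ∧
    (∀ u : AF.domain, ‖(u : H)‖ ≤ ‖AF u‖) := by
  subst hAF
  set S : Submodule ℂ H := LinearMap.range (e : 𝓗 →ₗ[ℂ] H) with hSdef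
  set AF : H →ₗ.[ℂ] H := A.adjoint.domRestrict S with hAFdef
  -- norm bound on e
  have hnorm : ∀ x : 𝓗, ‖e x‖ ≤ ‖x‖ := by
    have hcl : IsClosed {x : 𝓗 | ‖e x‖ ≤ ‖x‖} :=
      isClosed_le (continuous_norm.comp e.continuous) continuous_norm
    intro x
    have hx : x ∈ closure (Set.range ψ) := by
      rw [hψdense.closure_range]; trivial
    refine hcl.closure_subset_iff.mpr ?_ hx
    rintro _ ⟨u, rfl⟩
    simp only [Set.mem_setOf_eq, he u]
    have h1 : ‖(u : H)‖ ^ 2 ≤ ‖ψ u‖ ^ 2 := by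
      have h := hbd u
      rw [← hψ u u, ← RCLike.re_to_complex, inner_self_eq_norm_sq] at h
      exact h
    nlinarith [norm_nonneg (u : H), norm_nonneg (ψ u)]
  -- key identity 2
  have hkey2 : ∀ (v : A.domain) (x : 𝓗), ⟪x, ψ v⟫_ℂ = ⟪e x, A v⟫_ℂ := by
    intro v
    have hcl : IsClosed {x : 𝓗 | ⟪x, ψ v⟫_ℂ = ⟪e x, A v⟫_ℂ} :=
      isClosed_eq (Continuous.inner continuous_id continuous_const)
        (Continuous.inner e.continuous continuous_const)
    intro x
    have hx : x ∈ closure (Set.range ψ) := by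
      rw [hψdense.closure_range]; trivial
    refine hcl.closure_subset_iff.mpr ?_ hx
    rintro _ ⟨u, rfl⟩
    simp only [Set.mem_setOf_eq, he u, hψ u v, hsym u v]
  -- A.domain sits inside AF.domain
  have hsub : ∀ u : A.domain, (u : H) ∈ AF.domain := by
    intro u
    rw [hAFdef, LinearPMap.domRestrict_domain, Submodule.mem_inf]
    refine ⟨⟨ψ u, he u⟩, ?_⟩
    exact LinearPMap.mem_adjoint_domain_of_exists _ ⟨A u, fun x => hsym u x⟩
  have hdAF : Dense (AF.domain : Set H) := by
    refine Dense.mono ?_ hdense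
    intro x hx
    exact hsub ⟨x, hx⟩
  -- membership decomposition
  have hmemAF : ∀ y : H, y ∈ AF.domain ↔ y ∈ S ∧ y ∈ A.adjoint.domain := by
    intro y
    rw [hAFdef, LinearPMap.domRestrict_domain, Submodule.mem_inf]
  -- key identity 3
  have hkey3 : ∀ (u : AF.domain) (x : 𝓗), e x = (u : H) → ∀ y : 𝓗,
      ⟪AF u, e y⟫_ℂ = ⟪x, y⟫_ℂ := by
    intro u x hx
    have hu2 : (u : H) ∈ A.adjoint.domain := ((hmemAF u).mp u.2).2
    have hval : AF u = A.adjoint ⟨(u : H), hu2⟩ := LinearPMap.domRestrict_apply rfl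
    have hcl : IsClosed {y : 𝓗 | ⟪AF u, e y⟫_ℂ = ⟪x, y⟫_ℂ} :=
      isClosed_eq (Continuous.inner continuous_const e.continuous)
        (Continuous.inner continuous_const continuous_id)
    intro y
    have hy : y ∈ closure (Set.range ψ) := by
      rw [hψdense.closure_range]; trivial
    refine hcl.closure_subset_iff.mpr ?_ hy
    rintro _ ⟨v, rfl⟩
    simp only [Set.mem_setOf_eq, he v, hval]
    rw [LinearPMap.adjoint_isFormalAdjoint hdense ⟨(u : H), hu2⟩ v]
    rw [hkey2 v x, hx]
  -- surjectivity
  have hsurj : ∀ w : H, ∃ u : AF.domain, AF u = w := by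
    intro w
    set x : 𝓗 := (ContinuousLinearMap.adjoint e) w with hxdef
    have hx1 : ∀ v : A.domain, ⟪w, (v : H)⟫_ℂ = ⟪e x, A v⟫_ℂ := by
      intro v
      rw [← hkey2 v x, hxdef, ContinuousLinearMap.adjoint_inner_left, he v]
    have hmem : e x ∈ A.adjoint.domain :=
      LinearPMap.mem_adjoint_domain_of_exists _ ⟨w, fun v => hx1 v⟩
    have hmem2 : e x ∈ AF.domain := (hmemAF (e x)).mpr ⟨⟨x, rfl⟩, hmem⟩
    refine ⟨⟨e x, hmem2⟩, ?_⟩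
    have hval : AF ⟨e x, hmem2⟩ = A.adjoint ⟨e x, hmem⟩ := LinearPMap.domRestrict_apply rfl
    rw [hval]
    exact LinearPMap.adjoint_apply_eq hdense _ fun v => hx1 v
  -- preimage under e
  have hpre : ∀ u : AF.domain, ∃ x : 𝓗, e x = (u : H) := by
    intro u
    obtain ⟨x, hx⟩ := ((hmemAF u).mp u.2).1
    exact ⟨x, hx⟩
  -- coercivity
  have hcoerc : ∀ u : AF.domain, ‖(u : H)‖ ^ 2 ≤ (⟪AF u, (u : H)⟫_ℂ).re := by
    intro u
    obtain ⟨x, hx⟩ := hpre u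
    have h1 : ⟪AF u, (u : H)⟫_ℂ = ⟪x, x⟫_ℂ := by
      rw [← hx]; exact hkey3 u x hx x
    have h2 : (⟪x, x⟫_ℂ).re = ‖x‖ ^ 2 := by
      rw [← RCLike.re_to_complex]; exact inner_self_eq_norm_sq x
    rw [h1, h2]
    calc ‖(u : H)‖ ^ 2 = ‖e x‖ ^ 2 := by rw [hx]
      _ ≤ ‖x‖ ^ 2 := by
          have := hnorm x
          nlinarith [norm_nonneg (e x), norm_nonneg x]
  -- norm bound
  have hbound : ∀ u : AF.domain, ‖(u : H)‖ ≤ ‖AF u‖ := by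
    intro u
    have h2 : ‖(u : H)‖ ^ 2 ≤ ‖AF u‖ * ‖(u : H)‖ := by
      refine (hcoerc u).trans ?_
      calc (⟪AF u, (u : H)⟫_ℂ).re ≤ ‖⟪AF u, (u : H)⟫_ℂ‖ := by
            rw [← RCLike.re_to_complex]; exact RCLike.re_le_norm _
        _ ≤ ‖AF u‖ * ‖(u : H)‖ := norm_inner_le_norm _ _
    rcases eq_or_lt_of_le (norm_nonneg ((u : H))) with h | h
    · rw [← h]; exact norm_nonneg _
    · have h3 : ‖(u : H)‖ * ‖(u : H)‖ ≤ ‖AF u‖ * ‖(u : H)‖ := by nlinarith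
      exact le_of_mul_le_mul_right h3 h
  -- injectivity
  have hinj : Function.Injective (fun u : AF.domain => AF u) := by
    intro u v huv
    simp only at huv
    have hz : AF (u - v) = 0 := by
      rw [AF.map_sub, huv, sub_self]
    have := hbound (u - v)
    rw [hz, norm_zero] at this
    have h0 : ‖(u : H) - (v : H)‖ ≤ 0 := by
      simpa using this
    have : (u : H) = (v : H) := by
      have := norm_le_zero_iff.mp h0
      rwa [sub_eq_zero] at this
    exact Subtype.ext this
  -- symmetry
  have hsymAF : AF.IsFormalAdjoint AF := by
    intro u v
    obtain ⟨x, hx⟩ := hpre u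
    obtain ⟨y, hy⟩ := hpre v
    have h1 : ⟪AF u, (v : H)⟫_ℂ = ⟪x, y⟫_ℂ := by
      rw [← hy]; exact hkey3 u x hx y
    have h2 : ⟪AF v, (u : H)⟫_ℂ = ⟪y, x⟫_ℂ := by
      rw [← hx]; exact hkey3 v y hy x
    have h3 : ⟪(u : H), (AF v : H)⟫_ℂ = (starRingEnd ℂ) ⟪(AF v : H), (u : H)⟫_ℂ :=
      (inner_conj_symm _ _).symm
    rw [h1, h3, h2, inner_conj_symm]
  have hle2 : AF ≤ AF.adjoint :=
    LinearPMap.IsFormalAdjoint.le_adjoint hdAF hsymAF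
  -- core: adjoint domain is contained in AF domain
  have hcore : ∀ (y : H) (hy : y ∈ AF.adjoint.domain),
      ∃ u : AF.domain, (u : H) = y ∧ AF u = AF.adjoint ⟨y, hy⟩ := by
    intro y hy
    obtain ⟨u, hu⟩ := hsurj (AF.adjoint ⟨y, hy⟩)
    have hperp : ∀ w : H, ⟪y - (u : H), w⟫_ℂ = 0 := by
      intro w
      obtain ⟨v, hv⟩ := hsurj w
      rw [← hv, inner_sub_left]
      have h1 : ⟪(AF.adjoint ⟨y, hy⟩ : H), (v : H)⟫_ℂ = ⟪y, AF v⟫_ℂ :=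
        LinearPMap.adjoint_isFormalAdjoint hdAF ⟨y, hy⟩ v
      have h2 : ⟪AF u, (v : H)⟫_ℂ = ⟪(u : H), AF v⟫_ℂ := hsymAF u v
      rw [← h1, ← h2, hu, sub_self]
    have hy_eq : y = (u : H) := by
      have h := hperp (y - (u : H))
      rw [inner_self_eq_zero, sub_eq_zero] at h
      exact h
    exact ⟨u, hy_eq.symm, hu⟩
  have hle1 : AF.adjoint ≤ AF := by
    refine ⟨?_, ?_⟩
    · intro y hy
      obtain ⟨u, hu1, _⟩ := hcore y hy
      rw [← hu1]; exact u.2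
    · intro a b hab
      obtain ⟨u, hu1, hu2⟩ := hcore (a : H) a.2
      have hbu : b = u := Subtype.ext (hab.symm.trans hu1.symm)
      rw [hbu, hu2]
  have hadj : AF.adjoint = AF := le_antisymm hle1 hle2
  exact ⟨hadj, hcoerc, ⟨hinj, fun w => hsurj w⟩, hbound⟩
end
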